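/- arXiv:1403.7114 — 4 statements merged into one kernel-verified Lean document; each statement's English description precedes it below -/
import Mathlib

section
/- Let X_a be square matrices defined by (X_a)_b^c = −f_{ab}^c + h^c_I d^I_{ab}, where f_{ab}^c is antisymmetric in a,b, d^I_{ab} is symmetric in a,b, and the constants satisfy the six-dimensional tensor hierarchy constraints. Then the matrix commutator satisfies [X_a, X_b] = −X_{ab}^c X_c, where X_{ab}^c = −f_{ab}^c + h^c_I d^I_{ab}. Consequently the product (x_a ∘ x_b) := X_{ab}^c x_c defines a Leibniz algebra: x_a ∘ (x_b ∘ x_c) = (x_a ∘ x_b) ∘ x_c + x_b ∘ (x_a ∘ x_c). -/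
/-!
Write `X_{ab}{}^c = -f_{ab}{}^c + H_{ab}{}^c` with `H_{ab}{}^c = h^c_I d^I_{ab}` (`symTerm`),
symmetric in `a b`. Constraint (iii) says exactly that `H` acts trivially:
`H_{ab}{}^e X_{ec}{}^w = 0`. Expanding `[X_a, X_b] + X_{ab}{}^c X_c` into contractions of type
`f f`, `f H` and `H H`, the `f f` part is the Jacobiator of `f`, which by (ii) is a third of a
cyclic sum of `f H` terms; constraint (i), contracted with `h^w_I` (its `b g` term dies since
`h g = 0`), rewrites these as `H H` terms, and everything cancels.

For the Leibniz rule put `L(x) = x^a X_a`. Then `x ∘ y = y L(x)` (row vector times matrix), so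
`x ∘ (y ∘ z) = z L(y) L(x)`, and the Leibniz rule becomes the commutator relation
`[L(x), L(y)] = -L(x ∘ y)`.
-/

open Finset Matrix

namespace TensorHierarchy

section StructureConstants

variable {R ι : Type*} [CommRing R] [Fintype ι]

def structProd (X : ι → Matrix ι ι R) (x y : ι → R) : ι → R :=
  fun c => ∑ a, ∑ b, x a * y b * X a b c

lemma structProd_eq_vecMul (X : ι → Matrix ι ι R) (x y : ι → R) :
    structProd X x y = y ᵥ* ∑ a, x a • X a := by
  ext c
  simp only [structProd, vecMul, dotProduct, Matrix.sum_apply, Matrix.smul_apply, smul_eq_mul,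
    mul_sum]
  rw [sum_comm]
  exact sum_congr rfl fun a _ => sum_congr rfl fun b _ => by ring

variable {X : ι → Matrix ι ι R}

lemma commutator_sum_smul (hX : ∀ a b, X a * X b - X b * X a = -∑ c, X a b c • X c)
    (x y : ι → R) :
    (∑ a, x a • X a) * (∑ b, y b • X b) - (∑ b, y b • X b) * (∑ a, x a • X a)
      = -∑ c, structProd X x y c • X c := by
  calc _ = ∑ a, ∑ b, (x a * y b) • (X a * X b - X b * X a) := by
        simp only [smul_sub, sum_sub_distrib, sum_mul_sum, smul_mul_smul_comm]
        rw [sum_comm (s := univ) (t := univ) (f := fun b a => (y b * x a) • (X b * X a))]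
        simp only [mul_comm (y _)]
    _ = -∑ c, structProd X x y c • X c := by
        simp only [hX, smul_neg, sum_neg_distrib, smul_sum, smul_smul, structProd, sum_smul]
        conv_rhs => rw [sum_comm]; enter [1, 2, a]; rw [sum_comm]

theorem structProd_leibniz (hX : ∀ a b, X a * X b - X b * X a = -∑ c, X a b c • X c)
    (x y z : ι → R) :
    structProd X x (structProd X y z)
      = structProd X (structProd X x y) z + structProd X y (structProd X x z) := by
  have hcomm := commutator_sum_smul hX x y
  simp only [structProd_eq_vecMul X _ z, structProd_eq_vecMul X _ (_ ᵥ* _), vecMul_vecMul,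
    ← vecMul_add]
  congr 1
  rw [← sub_eq_iff_eq_add, ← neg_sub, hcomm, neg_neg]

end StructureConstants

section Contraction

variable {R ι : Type*} [CommRing R] [Fintype ι]

def contract (T U : ι → ι → ι → R) (p q r w : ι) : R := ∑ e, T p q e * U r e w

lemma contract_swap_of_antisymm {T : ι → ι → ι → R} (hT : ∀ p q e, T p q e = -T q p e)
    (U : ι → ι → ι → R) (p q r w : ι) : contract T U q p r w = -contract T U p q r w := by
  simp only [contract, hT q p, neg_mul, sum_neg_distrib]

lemma contract_swap_of_symm {T : ι → ι → ι → R} (hT : ∀ p q e, T p q e = T q p e)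
    (U : ι → ι → ι → R) (p q r w : ι) : contract T U q p r w = contract T U p q r w := by
  simp only [contract, hT q p]

lemma contract_neg_add (T S : ι → ι → ι → R) (p q r w : ι) :
    contract (fun a b c => -T a b c + S a b c) (fun a b c => -T a b c + S a b c) p q r w
      = contract T T p q r w - contract T S p q r w - contract S T p q r w
        + contract S S p q r w := by
  simp only [contract, ← sum_sub_distrib, ← sum_add_distrib]
  exact sum_congr rfl fun e _ => by ring

end Contraction

section Constraints

variable {ι κ : Type*} [Fintype κ] {f : ι → ι → ι → ℝ} {d : κ → ι → ι → ℝ} {h : ι → κ → ℝ}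

def symTerm (h : ι → κ → ℝ) (d : κ → ι → ι → ℝ) (a b c : ι) : ℝ := ∑ I, h c I * d I a b

def structConst (f : ι → ι → ι → ℝ) (h : ι → κ → ℝ) (d : κ → ι → ι → ℝ) (a b c : ι) : ℝ :=
  -f a b c + symTerm h d a b c

lemma symTerm_comm (hd : ∀ I a b, d I a b = d I b a) (a b c : ι) :
    symTerm h d a b c = symTerm h d b a c := by
  simp only [symTerm, hd _ a b]

variable [Fintype ι]

def ConstraintI (f : ι → ι → ι → ℝ) (d : κ → ι → ι → ℝ) (h : ι → κ → ℝ) (g : κ → ι → ℝ)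
    (b : κ → ι → ι → ℝ) : Prop :=
  ∀ I r u v,
    ∑ s, ∑ J, (d J r u * d I v s + d J r v * d I u s - 2 * d I r s * d J u v) * h s J
      = ∑ s, (f r u s * d I v s + f r v s * d I u s) - ∑ s, ∑ J, b J s r * d J u v * g I s

def ConstraintII (f : ι → ι → ι → ℝ) (d : κ → ι → ι → ℝ) (h : ι → κ → ℝ) : Prop :=
  ∀ p q r s, ∑ u, (f p q u * f r u s + f q r u * f p u s + f r p u * f q u s)
    = (1/3 : ℝ) * ∑ u, ∑ I, h s I * (d I u p * f q r u + d I u q * f r p u + d I u r * f p q u)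

def ConstraintIII (f : ι → ι → ι → ℝ) (d : κ → ι → ι → ℝ) (h : ι → κ → ℝ) : Prop :=
  ∀ s t I, ∑ r, f r s t * h r I = ∑ r, ∑ J, d J r s * h t J * h r I

lemma sum_h_mul_structConst_eq_zero (h3 : ConstraintIII f d h) (I : κ) (r w : ι) :
    ∑ e, h e I * structConst f h d e r w = 0 := by
  simp only [structConst, symTerm, mul_add, mul_neg, sum_add_distrib, sum_neg_distrib, mul_sum]
  rw [neg_add_eq_zero]
  simp only [mul_comm (h _ I), h3 r w I]
  exact sum_congr rfl fun e _ => sum_congr rfl fun J _ => by ring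

lemma sum_symTerm_mul_structConst_eq_zero (h3 : ConstraintIII f d h) (p q r w : ι) :
    ∑ e, symTerm h d p q e * structConst f h d e r w = 0 := by
  simp only [symTerm, sum_mul]
  rw [sum_comm]
  refine sum_eq_zero fun I _ => ?_
  simp only [mul_right_comm _ (d I p q), ← sum_mul, sum_h_mul_structConst_eq_zero h3, zero_mul]

lemma contract_symTerm_f_eq_neg (hf : ∀ a b c, f a b c = -f b a c)
    (hd : ∀ I a b, d I a b = d I b a) (h3 : ConstraintIII f d h) (p q r w : ι) :
    contract (symTerm h d) f p q r w = -contract (symTerm h d) (symTerm h d) p q r w := by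
  rw [eq_neg_iff_add_eq_zero, ← sum_symTerm_mul_structConst_eq_zero h3 p q r w, contract,
    contract, ← sum_add_distrib]
  refine sum_congr rfl fun e _ => ?_
  rw [structConst, hf r e, symTerm_comm hd r e]
  ring

lemma contract_structConst (hf : ∀ a b c, f a b c = -f b a c)
    (hd : ∀ I a b, d I a b = d I b a) (h3 : ConstraintIII f d h) (p q r w : ι) :
    contract (structConst f h d) (structConst f h d) p q r w
      = contract f f p q r w - contract f (symTerm h d) p q r w
        + 2 * contract (symTerm h d) (symTerm h d) p q r w := by
  unfold structConst
  rw [contract_neg_add, contract_symTerm_f_eq_neg hf hd h3]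
  ring

lemma sum_structConst_mul_structConst (hf : ∀ a b c, f a b c = -f b a c)
    (hd : ∀ I a b, d I a b = d I b a) (h3 : ConstraintIII f d h) (a b c w : ι) :
    ∑ u, structConst f h d a b u * structConst f h d u c w
      = -(contract f f a b c w + contract f (symTerm h d) a b c w) := by
  rw [contract, contract, ← sum_add_distrib, ← sum_neg_distrib, ← sub_eq_zero,
    ← sum_symTerm_mul_structConst_eq_zero h3 a b c w, ← sum_sub_distrib]
  refine sum_congr rfl fun u _ => ?_
  rw [structConst, structConst, hf u c, symTerm_comm hd u c]
  ring

lemma cyclic_contract_f_f (hd : ∀ I a b, d I a b = d I b a) (h2 : ConstraintII f d h)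
    (p q r w : ι) :
    contract f f p q r w + contract f f q r p w + contract f f r p q w
      = (1/3 : ℝ) * (contract f (symTerm h d) p q r w + contract f (symTerm h d) q r p w
        + contract f (symTerm h d) r p q w) := by
  simp only [contract, ← sum_add_distrib, h2 p q r w]
  congr 1
  refine sum_congr rfl fun u _ => ?_
  simp only [symTerm, mul_sum, ← sum_add_distrib]
  refine sum_congr rfl fun I _ => ?_
  rw [hd I u p, hd I u q, hd I u r]
  ring

lemma contract_symTerm_symTerm_relation {g : κ → ι → ℝ} {b : κ → ι → ι → ℝ}
    (h1 : ConstraintI f d h g b) (h4 : ∀ r t, ∑ I, h r I * g I t = 0) (r u v w : ι) :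
    contract (symTerm h d) (symTerm h d) r u v w + contract (symTerm h d) (symTerm h d) r v u w
        - 2 * contract (symTerm h d) (symTerm h d) u v r w
      = contract f (symTerm h d) r u v w + contract f (symTerm h d) r v u w := by
  have hbg : ∑ I, h w I * ∑ s, ∑ J, b J s r * d J u v * g I s = 0 := by
    simp only [mul_sum]
    rw [sum_comm]
    refine sum_eq_zero fun s _ => ?_
    rw [sum_comm]
    refine sum_eq_zero fun J _ => ?_
    simp only [mul_left_comm (h w _), ← mul_sum, h4, mul_zero]
  calc _ = ∑ s, ∑ I, ∑ J, h w I *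
        ((d J r u * d I v s + d J r v * d I u s - 2 * d I r s * d J u v) * h s J) := by
        simp only [contract, symTerm, sum_mul, mul_sum, ← sum_add_distrib, ← sum_sub_distrib]
        exact sum_congr rfl fun s _ => sum_congr rfl fun I _ => sum_congr rfl fun J _ => by ring
    _ = ∑ I, h w I * ∑ s, ∑ J,
        (d J r u * d I v s + d J r v * d I u s - 2 * d I r s * d J u v) * h s J := by
        simp only [mul_sum]
        exact sum_comm
    _ = ∑ I, h w I * ∑ s, (f r u s * d I v s + f r v s * d I u s) := by
        simp only [h1 _ r u v, mul_sub, sum_sub_distrib, hbg, sub_zero]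
    _ = _ := by
        simp only [contract, symTerm, mul_sum, ← sum_add_distrib]
        rw [sum_comm]
        exact sum_congr rfl fun s _ => sum_congr rfl fun I _ => by ring

theorem of_structConst_commutator (hf : ∀ a b c, f a b c = -f b a c)
    (hd : ∀ I a b, d I a b = d I b a) {g : κ → ι → ℝ} {b : κ → ι → ι → ℝ}
    (h1 : ConstraintI f d h g b) (h2 : ConstraintII f d h) (h3 : ConstraintIII f d h)
    (h4 : ∀ r t, ∑ I, h r I * g I t = 0) (a b' : ι) :
    of (structConst f h d a) * of (structConst f h d b')
        - of (structConst f h d b') * of (structConst f h d a)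
      = -∑ c, structConst f h d a b' c • of (structConst f h d c) := by
  ext c w
  simp only [Matrix.sub_apply, mul_apply, Matrix.neg_apply, Matrix.sum_apply, Matrix.smul_apply,
    smul_eq_mul, of_apply]
  change contract _ _ a c b' w - contract _ _ b' c a w = _
  rw [contract_structConst hf hd h3, contract_structConst hf hd h3,
    sum_structConst_mul_structConst hf hd h3]
  have hsymm := contract_swap_of_symm (symTerm_comm (h := h) hd) (symTerm h d)
  linear_combination -cyclic_contract_f_f hd h2 a b' c w
    - (4/3 : ℝ) * contract_symTerm_symTerm_relation h1 h4 b' a c w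
    - (2/3 : ℝ) * contract_symTerm_symTerm_relation h1 h4 c a b' w
    + contract_swap_of_antisymm hf f a c b' w - contract_swap_of_antisymm hf (symTerm h d) a c b' w
    - (4/3 : ℝ) * contract_swap_of_antisymm hf (symTerm h d) a b' c w
    - (2/3 : ℝ) * contract_swap_of_antisymm hf (symTerm h d) b' c a w
    + (4/3 : ℝ) * hsymm a b' c w + (2/3 : ℝ) * hsymm a c b' w + (2/3 : ℝ) * hsymm b' c a w

end Constraints

end TensorHierarchy

open TensorHierarchy

theorem stmt8_general {ι κ : Type*} [Fintype ι] [Fintype κ]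
    (f : ι → ι → ι → ℝ)   -- f a b c = f_{ab}^c, antisymmetric in a b
    (d : κ → ι → ι → ℝ)   -- d I a b = d^I_{ab}, symmetric in a b
    (h : ι → κ → ℝ)       -- h c I = h^c_I
    (g : κ → ι → ℝ)       -- g I r = g^{Ir}
    (b : κ → ι → ι → ℝ)   -- b I r s = b_{Irs}
    (hf : ∀ a b' c, f a b' c = - f b' a c)
    (hd : ∀ I a b', d I a b' = d I b' a)
    -- constraint (i)
    (h1 : ∀ I r u v,
      ∑ s, ∑ J, (d J r u * d I v s + d J r v * d I u s - 2 * d I r s * d J u v) * h s J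
        = ∑ s, (f r u s * d I v s + f r v s * d I u s)
          - ∑ s, ∑ J, b J s r * d J u v * g I s)
    -- constraint (ii)
    (h2 : ∀ p q r s,
      ∑ u, (f p q u * f r u s + f q r u * f p u s + f r p u * f q u s)
        = (1/3 : ℝ) * ∑ u, ∑ I, h s I * (d I u p * f q r u + d I u q * f r p u + d I u r * f p q u))
    -- constraint (iii)
    (h3 : ∀ s t I, ∑ r, f r s t * h r I = ∑ r, ∑ J, d J r s * h t J * h r I)
    -- h^r_I g^{It} = 0
    (h4 : ∀ r t, ∑ I, h r I * g I t = 0) :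
    let Xc : ι → ι → ι → ℝ := fun a b' c => - f a b' c + ∑ I, h c I * d I a b'
    let X : ι → Matrix ι ι ℝ := fun a => Matrix.of fun c e => Xc a c e
    let prod : (ι → ℝ) → (ι → ℝ) → (ι → ℝ) :=
      fun x y c => ∑ a, ∑ b', x a * y b' * Xc a b' c
    (∀ a b', X a * X b' - X b' * X a = - ∑ c, Xc a b' c • X c) ∧
    (∀ x y z : ι → ℝ, prod x (prod y z) = prod (prod x y) z + prod y (prod x z)) := by
  intro Xc X prod
  have hcomm : ∀ a b', X a * X b' - X b' * X a = -∑ c, Xc a b' c • X c :=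
    of_structConst_commutator hf hd h1 h2 h3 h4
  exact ⟨hcomm, structProd_leibniz hcomm⟩

/-- With `(X_a)_b{}^c = −f_{ab}{}^c + h^c_I d^I_{ab}` and the six-dimensional
tensor hierarchy constraints, the matrices satisfy `[X_a, X_b] = −X_{ab}{}^c X_c`, and
consequently the bilinear product `(x ∘ y)^c = x^a y^b X_{ab}{}^c` defines a Leibniz
algebra: `x ∘ (y ∘ z) = (x ∘ y) ∘ z + y ∘ (x ∘ z)`. -/
theorem stmt8 {ι κ : Type*} [Fintype ι] [Fintype κ] [DecidableEq ι]
    (f : ι → ι → ι → ℝ)   -- f a b c = f_{ab}^c, antisymmetric in a b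
    (d : κ → ι → ι → ℝ)   -- d I a b = d^I_{ab}, symmetric in a b
    (h : ι → κ → ℝ)       -- h c I = h^c_I
    (g : κ → ι → ℝ)       -- g I r = g^{Ir}
    (b : κ → ι → ι → ℝ)   -- b I r s = b_{Irs}
    (hf : ∀ a b' c, f a b' c = - f b' a c)
    (hd : ∀ I a b', d I a b' = d I b' a)
    -- constraint (i)
    (h1 : ∀ I r u v,
      ∑ s, ∑ J, (d J r u * d I v s + d J r v * d I u s - 2 * d I r s * d J u v) * h s J
        = ∑ s, (f r u s * d I v s + f r v s * d I u s)
          - ∑ s, ∑ J, b J s r * d J u v * g I s)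
    -- constraint (ii)
    (h2 : ∀ p q r s,
      ∑ u, (f p q u * f r u s + f q r u * f p u s + f r p u * f q u s)
        = (1/3 : ℝ) * ∑ u, ∑ I, h s I * (d I u p * f q r u + d I u q * f r p u + d I u r * f p q u))
    -- constraint (iii)
    (h3 : ∀ s t I, ∑ r, f r s t * h r I = ∑ r, ∑ J, d J r s * h t J * h r I)
    -- h^r_I g^{It} = 0
    (h4 : ∀ r t, ∑ I, h r I * g I t = 0) :
    let Xc : ι → ι → ι → ℝ := fun a b' c => - f a b' c + ∑ I, h c I * d I a b'
    let X : ι → Matrix ι ι ℝ := fun a => Matrix.of fun c e => Xc a c e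
    let prod : (ι → ℝ) → (ι → ℝ) → (ι → ℝ) :=
      fun x y c => ∑ a, ∑ b', x a * y b' * Xc a b' c
    (∀ a b', X a * X b' - X b' * X a = - ∑ c, Xc a b' c • X c) ∧
    (∀ x y z : ι → ℝ, prod x (prod y z) = prod (prod x y) z + prod y (prod x z)) :=
  stmt8_general f d h g b hf hd h1 h2 h3 h4
end

section
/- Under the six-dimensional tensor hierarchy constraints, the symmetric part of the structure constants is annihilated by the generators: the identity X_{(ab)}^c X_c = 0 holds, where X_{ab}^c = −f_{ab}^c + h^c_I d^I_{ab} and X_{(ab)}^c = h^c_I d^I_{ab}, and (X_c)_d^e = −f_{cd}^e + h^e_J d^J_{cd}. -/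
open Finset

/-! The quadratic constraint `f_{rs}^t h^r_I = d^J_{rs} h^t_J h^r_I` says precisely that
`h^c_I (X_c)_d^e = 0` for every `I`, i.e. each `h_I` annihilates the generators; contracting
with `d^I_{ab}` gives the claim. -/

section

variable {R ι κ : Type*} [CommRing R] [Fintype ι] [Fintype κ]

theorem sum_mul_generator_eq_zero (f : ι → ι → ι → R) (d : κ → ι → ι → R) (h : ι → κ → R)
    (h3 : ∀ s t I, ∑ r, f r s t * h r I = ∑ r, ∑ J, d J r s * h t J * h r I) (I : κ) (s t : ι) :
    ∑ c, h c I * (-f c s t + ∑ J, h t J * d J c s) = 0 := by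
  have hquad : ∑ c, h c I * ∑ J, h t J * d J c s = ∑ c, f c s t * h c I := by
    rw [h3]
    simp only [mul_sum]
    exact sum_congr rfl fun c _ => sum_congr rfl fun J _ => by ring
  simp only [mul_add, sum_add_distrib, mul_neg, sum_neg_distrib, hquad]
  rw [neg_add_eq_zero]
  exact sum_congr rfl fun c _ => mul_comm _ _

theorem sum_sum_mul_mul_eq_zero_of_forall_sum_mul_eq_zero (h : ι → κ → R) (w : κ → R)
    (X : ι → R) (hX : ∀ I, ∑ c, h c I * X c = 0) :
    ∑ c, (∑ I, h c I * w I) * X c = 0 := by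
  calc ∑ c, (∑ I, h c I * w I) * X c = ∑ I, w I * ∑ c, h c I * X c := by
        simp only [sum_mul, mul_sum]
        rw [sum_comm]
        exact sum_congr rfl fun I _ => sum_congr rfl fun c _ => by ring
    _ = 0 := by simp [hX]

end

theorem stmt9_general {ι κ : Type*} [Fintype ι] [Fintype κ]
    (f : ι → ι → ι → ℝ)   -- f a b c = f_{ab}^c, antisymmetric in a b
    (d : κ → ι → ι → ℝ)   -- d I a b = d^I_{ab}, symmetric in a b
    (h : ι → κ → ℝ)       -- h c I = h^c_I
    -- f_{rs}^t h^r_I − d^J_{rs} h^t_J h^r_I = 0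
    (h3 : ∀ s t I, ∑ r, f r s t * h r I = ∑ r, ∑ J, d J r s * h t J * h r I) :
    ∀ a b' dd e : ι,
      ∑ c, (∑ I, h c I * d I a b') * (- f c dd e + ∑ J, h e J * d J c dd) = 0 :=
  fun a b' dd e => sum_sum_mul_mul_eq_zero_of_forall_sum_mul_eq_zero h (fun I => d I a b') _
    fun I => sum_mul_generator_eq_zero f d h h3 I dd e

/-- Under the six-dimensional tensor hierarchy constraints, the symmetric part
of the structure constants is annihilated by the generators:
`X_{(ab)}{}^c X_c = 0`, i.e. `∑_c (h^c_I d^I_{ab}) (X_c)_d{}^e = 0` for all `a,b,d,e`,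
where `(X_c)_d{}^e = −f_{cd}{}^e + h^e_J d^J_{cd}`. -/
theorem stmt9 {ι κ : Type*} [Fintype ι] [Fintype κ]
    (f : ι → ι → ι → ℝ)   -- f a b c = f_{ab}^c, antisymmetric in a b
    (d : κ → ι → ι → ℝ)   -- d I a b = d^I_{ab}, symmetric in a b
    (h : ι → κ → ℝ)       -- h c I = h^c_I
    (g : κ → ι → ℝ)       -- g I r = g^{Ir}
    (b : κ → ι → ι → ℝ)   -- b I r s = b_{Irs}
    (hf : ∀ a b' c, f a b' c = - f b' a c)
    (hd : ∀ I a b', d I a b' = d I b' a)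
    -- first tensor hierarchy identity
    (h1 : ∀ I r u v,
      ∑ s, ∑ J, (d J r u * d I v s + d J r v * d I u s - 2 * d I r s * d J u v) * h s J
        = ∑ s, (f r u s * d I v s + f r v s * d I u s)
          - ∑ s, ∑ J, b J s r * d J u v * g I s)
    -- f_{rs}^t h^r_I − d^J_{rs} h^t_J h^r_I = 0
    (h3 : ∀ s t I, ∑ r, f r s t * h r I = ∑ r, ∑ J, d J r s * h t J * h r I)
    -- h^r_I g^{It} = 0
    (h4 : ∀ r t, ∑ I, h r I * g I t = 0) :
    ∀ a b' dd e : ι,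
      ∑ c, (∑ I, h c I * d I a b') * (- f c dd e + ∑ J, h e J * d J c dd) = 0 :=
  stmt9_general f d h h3
end

section
/- Under the six-dimensional tensor hierarchy constraints, the identity g^{Kr} h^s_{[I} b_{J]rs} = 0 holds, i.e., g^{Kr}(h^s_I b_{Jrs} − h^s_J b_{Irs}) = 0. -/
open Finset

/-! Contracting constraint (6) with `g^{Kr}` and antisymmetrizing in `I, J` leaves
`2 h_I^s h_J^r d^K_{rs}` antisymmetrized, which vanishes because `d^K` is symmetric. -/

theorem sum_sum_mul_mul_comm_of_symm {ι R : Type*} [Fintype ι] [CommSemiring R]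
    (M : ι → ι → R) (hM : ∀ a b, M a b = M b a) (x y : ι → R) :
    ∑ r, ∑ s, x s * y r * M r s = ∑ r, ∑ s, y s * x r * M r s := by
  rw [sum_comm]
  exact sum_congr rfl fun r _ => sum_congr rfl fun s _ => by rw [hM]; ring

theorem stmt10_general {ι κ : Type*} [Fintype ι] [Fintype κ]
    (d : κ → ι → ι → ℝ)   -- d I a b = d^I_{ab}, symmetric in a b
    (h : ι → κ → ℝ)       -- h c I = h^c_I
    (g : κ → ι → ℝ)       -- g I r = g^{Ir}
    (b : κ → ι → ι → ℝ)   -- b I r s = b_{Irs}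
    (hd : ∀ I a b', d I a b' = d I b' a)
    -- (6) g^{Js} h^r_K b_{Isr} − 2 h_I^s h_K^r d^J_{rs} = 0
    (h6 : ∀ I J K,
      ∑ s, ∑ r, g J s * h r K * b I s r = 2 * ∑ r, ∑ s, h s I * h r K * d J r s) :
    ∀ K I J : κ, ∑ r, ∑ s, g K r * (h s I * b J r s - h s J * b I r s) = 0 := by
  intro K I J
  simp only [mul_sub, sum_sub_distrib, ← mul_assoc]
  rw [h6 J K I, h6 I K J, sum_sum_mul_mul_comm_of_symm (d K) (hd K), sub_self]

/-- Under the six-dimensional tensor hierarchy constraints (the full system of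
algebraic identities among `b, d, g, h, f`), the identity `g^{Kr} h^s_{[I} b_{J]rs} = 0`
holds, i.e. `∑_{r,s} g^{Kr} (h^s_I b_{Jrs} − h^s_J b_{Irs}) = 0`. -/
theorem stmt10 {ι κ : Type*} [Fintype ι] [Fintype κ]
    (f : ι → ι → ι → ℝ)   -- f a b c = f_{ab}^c, antisymmetric in a b
    (d : κ → ι → ι → ℝ)   -- d I a b = d^I_{ab}, symmetric in a b
    (h : ι → κ → ℝ)       -- h c I = h^c_I
    (g : κ → ι → ℝ)       -- g I r = g^{Ir}
    (b : κ → ι → ι → ℝ)   -- b I r s = b_{Irs}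
    (hf : ∀ a b' c, f a b' c = - f b' a c)
    (hd : ∀ I a b', d I a b' = d I b' a)
    -- (1) 2(d^J_{r(u} d^I_{v)s} − d^I_{rs} d^J_{uv}) h^s_J = 2 f_{r(u}^s d^I_{v)s} − b_{Jsr} d^J_{uv} g^{Is}
    (h1 : ∀ I r u v,
      ∑ s, ∑ J, (d J r u * d I v s + d J r v * d I u s - 2 * d I r s * d J u v) * h s J
        = ∑ s, (f r u s * d I v s + f r v s * d I u s)
          - ∑ s, ∑ J, b J s r * d J u v * g I s)
    -- (2) (d^J_{rs} b_{Iut} + d^J_{rt} b_{Isu} + 2 d^K_{ru} b_{Kst} δ^J_I) h^u_J = f_{rs}^u b_{Iut} + f_{rt}^u b_{Isu} + g^{Ju} b_{Iur} b_{Jst}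
    (h2 : ∀ I r s t,
      ∑ u, ∑ J, (d J r s * b I u t + d J r t * b I s u) * h u J
          + 2 * ∑ u, ∑ K, d K r u * b K s t * h u I
        = ∑ u, (f r s u * b I u t + f r t u * b I s u)
          + ∑ u, ∑ J, g J u * b I u r * b J s t)
    -- (3) f_{[pq}^u f_{r]u}^s − (1/3) h_I^s d^I_{u[p} f_{qr]}^u = 0
    (h3 : ∀ p q r s,
      ∑ u, (f p q u * f r u s + f q r u * f p u s + f r p u * f q u s)
        = (1/3 : ℝ) * ∑ u, ∑ I, h s I * (d I u p * f q r u + d I u q * f r p u + d I u r * f p q u))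
    -- (4) h^r_I g^{It} = 0
    (h4 : ∀ r t, ∑ I, h r I * g I t = 0)
    -- (5) f_{rs}^t h^r_I − d^J_{rs} h^t_J h^r_I = 0
    (h5 : ∀ s t I, ∑ r, f r s t * h r I = ∑ r, ∑ J, d J r s * h t J * h r I)
    -- (6) g^{Js} h^r_K b_{Isr} − 2 h_I^s h_K^r d^J_{rs} = 0
    (h6 : ∀ I J K,
      ∑ s, ∑ r, g J s * h r K * b I s r = 2 * ∑ r, ∑ s, h s I * h r K * d J r s)
    -- (7) −f_{rt}^s g^{It} + d^J_{rt} h^s_J g^{It} − g^{It} g^{Js} b_{Jtr} = 0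
    (h7 : ∀ r s I,
      ∑ t, f r t s * g I t
        = ∑ t, ∑ J, d J r t * h s J * g I t - ∑ t, ∑ J, g I t * g J s * b J t r)
    -- (8) b_{Jr(s} d^J_{uv)} = 0
    (h8 : ∀ r s u v,
      ∑ J, (b J r s * d J u v + b J r u * d J v s + b J r v * d J s u) = 0) :
    ∀ K I J : κ, ∑ r, ∑ s, g K r * (h s I * b J r s - h s J * b I r s) = 0 :=
  stmt10_general d h g b hd h6
end

section
/- Let 𝔤 be a Lie algebra. On the 4-term graded space 𝔤 ⊕ 𝔤[1]_l ⊕ 𝔤[1]_r ⊕ 𝔤[2] define: l₁(v) = [1]_r v for v ∈ 𝔤[1]_r; l₁(r) = [1]_l r for r ∈ 𝔤[1]_l; l₁(s) = [1]_r s − [1]_l s for s ∈ 𝔤[2]; binary brackets given by the 𝔤-bracket after shifting to 𝔤 in each slot (with [v,r]₂ = −[−2][[1]_r v, [1]_l r]_𝔤 for v ∈ 𝔤[1]_r, r ∈ 𝔤[1]_l), all other brackets zero. Then these data satisfy the L∞ Jacobi identities, defining a Lie 3-algebra structure. -/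
/-- The sign `(−1)^n`. -/
def ksign (n : ℤ) : ℤ := if Even n then 1 else -1

section

variable {L : Type*} [LieRing L] [LieAlgebra ℝ L]

/-- The 4-term graded space `𝔤 ⊕ 𝔤[1]_l ⊕ 𝔤[1]_r ⊕ 𝔤[2]`, with components
`(x₀, x_r, x_l, x₂)` of degrees `0, −1, −1, −2`. -/
abbrev V4 (L : Type*) := L × L × L × L

/-- Homogeneity predicate: degree 0 is the first component, degree −1 the two middle
(left/right) components, degree −2 the last component. -/
def deg4 (p : ℤ) (x : V4 L) : Prop :=
  (p = 0 ∧ x.2.1 = 0 ∧ x.2.2.1 = 0 ∧ x.2.2.2 = 0) ∨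
  (p = -1 ∧ x.1 = 0 ∧ x.2.2.2 = 0) ∨
  (p = -2 ∧ x.1 = 0 ∧ x.2.1 = 0 ∧ x.2.2.1 = 0)

/-- `l₁`: `l₁(v) = [1]_r v`, `l₁(r) = [1]_l r` (landing in `𝔤`), and
`l₁(s) = [1]_r s − [1]_l s` for `s ∈ 𝔤[2]`. -/
def l1map (x : V4 L) : V4 L := (x.2.1 + x.2.2.1, x.2.2.2, - x.2.2.2, 0)

/-- `l₂`: the binary brackets given by the `𝔤`-bracket after shifting to `𝔤` in each slot,
with `[v,r]₂ = −[−2][[1]_r v, [1]_l r]_𝔤`, extended bilinearly (all other brackets zero). -/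
def l2map (x y : V4 L) : V4 L :=
  (⁅x.1, y.1⁆,
   ⁅x.1, y.2.1⁆ - ⁅y.1, x.2.1⁆,
   ⁅x.1, y.2.2.1⁆ - ⁅y.1, x.2.2.1⁆,
   ⁅x.1, y.2.2.2⁆ - ⁅y.1, x.2.2.2⁆ - ⁅x.2.1, y.2.2.1⁆ - ⁅y.2.1, x.2.2.1⁆)

/-!
All four identities are multilinear. In the derivation and Jacobi identities the sign does
not involve the degree of the last argument, so, by linearity, that argument need not be
homogeneous. Component by component, an identity is a relation between Lie monomials in `𝔤`,
each containing exactly one component of the last argument. Skew-symmetry, together with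
`⁅⁅a, b⁆, c⁆ = ⁅a, ⁅b, c⁆⁆ - ⁅b, ⁅a, c⁆⁆`, moves that component innermost on the right;
monomials of this shape are linearly independent in a free Lie algebra, so once the degrees
of the other arguments are split into cases, each component is an identity of abelian groups.
-/

section

omit [LieAlgebra ℝ L]

theorem l1map_l1map (x : V4 L) : l1map (l1map x) = 0 := by
  simp [l1map]

theorem l2map_antisymm {p q : ℤ} {x y : V4 L} (hx : deg4 p x) (hy : deg4 q y) :
    l2map x y = -(ksign (p * q) • l2map y x) := by
  obtain ⟨x₀, x_r, x_l, x₂⟩ := x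
  obtain ⟨y₀, y_r, y_l, y₂⟩ := y
  ext <;>
    simp only [l2map, Prod.fst_neg, Prod.snd_neg, Prod.smul_fst, Prod.smul_snd,
      ← lie_skew y₀, ← lie_skew y_r] <;>
    rcases hx with ⟨rfl, rfl, rfl, rfl⟩ | ⟨rfl, rfl, rfl⟩ | ⟨rfl, rfl, rfl, rfl⟩ <;>
    rcases hy with ⟨rfl, rfl, rfl, rfl⟩ | ⟨rfl, rfl, rfl⟩ | ⟨rfl, rfl, rfl, rfl⟩ <;>
    norm_num only [ksign, if_true, if_false, lie_zero, zero_lie] <;>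
    abel

theorem l1map_l2map {p : ℤ} {x : V4 L} (hx : deg4 p x) (y : V4 L) :
    l1map (l2map x y) = l2map (l1map x) y + ksign p • l2map x (l1map y) := by
  obtain ⟨x₀, x_r, x_l, x₂⟩ := x
  obtain ⟨y₀, y_r, y_l, y₂⟩ := y
  ext <;>
    simp only [l1map, l2map, Prod.fst_add, Prod.snd_add, Prod.smul_fst, Prod.smul_snd,
      ← lie_skew y₀, ← lie_skew y_r, ← lie_skew y_l, ← lie_skew y₂,
      lie_neg, neg_lie, lie_add, add_lie] <;>
    rcases hx with ⟨rfl, rfl, rfl, rfl⟩ | ⟨rfl, rfl, rfl⟩ | ⟨rfl, rfl, rfl, rfl⟩ <;>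
    norm_num only [ksign, if_true, if_false, lie_zero, zero_lie] <;>
    abel

theorem l2map_l2map {p q : ℤ} {x y : V4 L} (hx : deg4 p x) (hy : deg4 q y) (z : V4 L) :
    l2map (l2map x y) z = l2map x (l2map y z) - ksign (p * q) • l2map y (l2map x z) := by
  obtain ⟨x₀, x_r, x_l, x₂⟩ := x
  obtain ⟨y₀, y_r, y_l, y₂⟩ := y
  obtain ⟨z₀, z_r, z_l, z₂⟩ := z
  ext <;>
    simp only [l2map, Prod.fst_sub, Prod.snd_sub, Prod.smul_fst, Prod.smul_snd, lie_lie,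
      ← lie_skew z₀, ← lie_skew z_r, lie_neg, neg_lie, lie_sub, sub_lie] <;>
    rcases hx with ⟨rfl, rfl, rfl, rfl⟩ | ⟨rfl, rfl, rfl⟩ | ⟨rfl, rfl, rfl, rfl⟩ <;>
    rcases hy with ⟨rfl, rfl, rfl, rfl⟩ | ⟨rfl, rfl, rfl⟩ | ⟨rfl, rfl, rfl, rfl⟩ <;>
    norm_num only [ksign, if_true, if_false, lie_zero, zero_lie] <;>
    abel

end

/-- For a Lie algebra `𝔤`, the data `l₁`, `l₂` above (with `l₃ = l₄ = 0`) on
`𝔤 ⊕ 𝔤[1]_l ⊕ 𝔤[1]_r ⊕ 𝔤[2]` satisfy the L∞ Jacobi identities, defining a (strict)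
Lie 3-algebra structure: `l₁∘l₁ = 0`, graded antisymmetry of `l₂`, `l₁` is a graded
derivation of `l₂`, and `l₂` satisfies the graded Jacobi identity. -/
theorem stmt16 :
    (∀ x : V4 L, l1map (l1map x) = 0) ∧
    (∀ (p q : ℤ) (x y : V4 L), deg4 p x → deg4 q y →
        l2map x y = - (ksign (p * q) • l2map y x)) ∧
    (∀ (p q : ℤ) (x y : V4 L), deg4 p x → deg4 q y →
        l1map (l2map x y) = l2map (l1map x) y + ksign p • l2map x (l1map y)) ∧
    (∀ (p q r : ℤ) (x y z : V4 L), deg4 p x → deg4 q y → deg4 r z →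
        l2map (l2map x y) z
          = l2map x (l2map y z) - ksign (p * q) • l2map y (l2map x z)) :=
  ⟨l1map_l1map, fun _ _ _ _ hx hy => l2map_antisymm hx hy,
    fun _ _ _ y hx _ => l1map_l2map hx y, fun _ _ _ _ _ z hx hy _ => l2map_l2map hx hy z⟩

end
end
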